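/- Let ⟨A, ∧, ∨, ∼, ¬, 1⟩ be a De Morgan algebra with top 1 and bottom 0 = ∼1, equipped with a unary operation ¬ satisfying (T1) x ∧ ¬x = 0 and (T2) x ∨ ¬x = x ∨ ∼x. Define ∇x := ∼¬x. Then ⟨A, ∧, ∨, ∼, ∇, 1⟩ is a 4-valued modal algebra: ∼x ∨ ∇x = 1 and x ∧ ∼x = ∼x ∧ ∇x hold for all x. -/

import Mathlib

section DeMorganInvolution

variable {A : Type*} [Lattice A] {m : A → A}

theorem antitone_of_map_sup_eq_inf (hdm : ∀ x y : A, m (x ⊔ y) = m x ⊓ m y) : Antitone m :=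
  fun x y hxy => by
    rw [← sup_eq_right.2 hxy, hdm]
    exact inf_le_left

theorem map_inf_eq_sup_of_involutive (hinv : ∀ x : A, m (m x) = x)
    (hdm : ∀ x y : A, m (x ⊔ y) = m x ⊓ m y) (x y : A) : m (x ⊓ y) = m x ⊔ m y := by
  rw [← hinv (m x ⊔ m y), hdm, hinv, hinv]

theorem map_bot_eq_top_of_involutive [BoundedOrder A] (hinv : ∀ x : A, m (m x) = x)
    (hdm : ∀ x y : A, m (x ⊔ y) = m x ⊓ m y) : m ⊥ = ⊤ :=
  eq_top_iff.2 <| hinv ⊤ ▸ antitone_of_map_sup_eq_inf hdm bot_le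

end DeMorganInvolution

theorem stmt_general {A : Type*} [DistribLattice A] [BoundedOrder A]
    (m : A → A)
    (hinv : ∀ x : A, m (m x) = x)
    (hdm : ∀ x y : A, m (x ⊔ y) = m x ⊓ m y)
    (n : A → A)
    (T1 : ∀ x : A, x ⊓ n x = ⊥)
    (T2 : ∀ x : A, x ⊔ n x = x ⊔ m x)
    (d : A → A) (hd : ∀ x : A, d x = m (n x)) :
    ∀ x : A, m x ⊔ d x = ⊤ ∧ x ⊓ m x = m x ⊓ d x := by
  intro x
  constructor
  · rw [hd, ← map_inf_eq_sup_of_involutive hinv hdm, T1, map_bot_eq_top_of_involutive hinv hdm]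
  · rw [hd, ← hdm, T2, hdm, hinv, inf_comm]

theorem stmt {A : Type*} [DistribLattice A] [BoundedOrder A]
    (m : A → A)
    (hinv : ∀ x : A, m (m x) = x)
    (hdm : ∀ x y : A, m (x ⊔ y) = m x ⊓ m y)
    (hbot : m ⊤ = ⊥)
    (n : A → A)
    (T1 : ∀ x : A, x ⊓ n x = ⊥)
    (T2 : ∀ x : A, x ⊔ n x = x ⊔ m x)
    (d : A → A) (hd : ∀ x : A, d x = m (n x)) :
    ∀ x : A, m x ⊔ d x = ⊤ ∧ x ⊓ m x = m x ⊓ d x :=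
  stmt_general m hinv hdm n T1 T2 d hd
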